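/- arXiv:1601.05196 — 3 statements merged into one kernel-verified Lean document; each statement's English description precedes it below -/
import Mathlib

section
/- Let k be a commutative ring, R a commutative k-algebra, and let A and B be k-algebras each equipped with a k-algebra isomorphism from R onto its center. Let M be an invertible (B,A)-bimodule over k, i.e., a k-symmetric (B,A)-bimodule for which there exists an (A,B)-bimodule N with M ⊗[A] N ≅ B as B-bimodules and N ⊗[B] M ≅ A as A-bimodules. Then there exists a unique k-algebra automorphism f of R such that m · r = f(r) · m for all m ∈ M and r ∈ R, where r acts on the right through the identification of R with the center of A and f(r) acts on the left through the identification of R with the center of B. -/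
open scoped TensorProduct

universe u

/-- An `R`-central `(B,A)`-bimodule: a left `B`-module and right `A`-module (encoded as a
left `Aᵐᵒᵖ`-module) with commuting actions, both restricting to the same `R`-module
structure.  This is the same data as a module over `B ⊗[R] Aᵐᵒᵖ`. -/
structure CBimod (R B A : Type u) [CommRing R] [Ring B] [Ring A] [Algebra R B] [Algebra R A] :
    Type (u + 1) where
  carrier : Type u
  [isAddCommGroup : AddCommGroup carrier]
  [isModR : Module R carrier]
  [isModLeft : Module B carrier]
  [isModRight : Module Aᵐᵒᵖ carrier]
  [isTowerLeft : IsScalarTower R B carrier]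
  [isTowerRight : IsScalarTower R Aᵐᵒᵖ carrier]
  [isCommuting : SMulCommClass B Aᵐᵒᵖ carrier]

attribute [instance] CBimod.isAddCommGroup CBimod.isModR CBimod.isModLeft CBimod.isModRight
  CBimod.isTowerLeft CBimod.isTowerRight CBimod.isCommuting

variable {R B A C : Type u} [CommRing R] [Ring B] [Ring A] [Ring C]
  [Algebra R B] [Algebra R A] [Algebra R C]

/-- The subspace of `M ⊗[R] N` by which one quotients to form the balanced tensor product
`M ⊗[A] N`. -/
def midRel (M : CBimod R B A) (N : CBimod R A C) : Submodule R (M.carrier ⊗[R] N.carrier) :=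
  Submodule.span R {z | ∃ (m : M.carrier) (a : A) (x : N.carrier),
    z = (MulOpposite.op a • m) ⊗ₜ[R] x - m ⊗ₜ[R] (a • x)}

/-- The balanced tensor product `M ⊗[A] N` of an `R`-central `(B,A)`-bimodule `M` and an
`R`-central `(A,C)`-bimodule `N`. -/
abbrev tensorOver (M : CBimod R B A) (N : CBimod R A C) : Type u :=
  (M.carrier ⊗[R] N.carrier) ⧸ midRel M N

/-- `M ⊗[A] N ≅ B` as `B`-bimodules, where the two `B`-actions on `M ⊗[A] N` are induced by
the left `B`-action on `M` and the right `B`-action on `N`, and `B` is a bimodule over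
itself by left and right multiplication. -/
def TensorIsoAlgebra (M : CBimod R B A) (N : CBimod R A B) : Prop :=
  ∃ g : tensorOver M N ≃ₗ[R] B,
    (∀ (b : B) (m : M.carrier) (x : N.carrier),
        g (Submodule.Quotient.mk ((b • m) ⊗ₜ[R] x)) =
          b * g (Submodule.Quotient.mk (m ⊗ₜ[R] x))) ∧
    (∀ (b : B) (m : M.carrier) (x : N.carrier),
        g (Submodule.Quotient.mk (m ⊗ₜ[R] (MulOpposite.op b • x))) =
          g (Submodule.Quotient.mk (m ⊗ₜ[R] x)) * b)

/-- Right multiplication, as an `R`-algebra map `Aᵐᵒᵖ → End_R(A)`. -/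
def mulRightAlgHom (R A : Type u) [CommRing R] [Ring A] [Algebra R A] :
    Aᵐᵒᵖ →ₐ[R] Module.End R A where
  toFun b := LinearMap.mulRight R b.unop
  map_one' := by ext x; simp
  map_mul' b b' := by ext x; simp [mul_assoc]
  map_zero' := by ext x; simp
  map_add' b b' := by ext x; simp [mul_add]
  commutes' r := by
    ext x
    simp [Module.algebraMap_end_apply, ← Algebra.commutes r x, Algebra.smul_def]

/-- The action map `A ⊗[R] Aᵐᵒᵖ → End_R(A)`, `a ⊗ bᵒᵖ ↦ (x ↦ a * x * b)`; an algebra `A` is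
Azumaya over `R` precisely when it is finitely generated projective as an `R`-module and
this map is bijective. -/
noncomputable def azumayaHom (R A : Type u) [CommRing R] [Ring A] [Algebra R A] :
    A ⊗[R] Aᵐᵒᵖ →ₐ[R] Module.End R A :=
  Algebra.TensorProduct.lift (Algebra.lmul R A) (mulRightAlgHom R A)
    (fun a b => by
      show _ = _
      ext x
      simp [mulRightAlgHom, Module.End.mul_apply, mul_assoc])

open MulOpposite

/-! Right multiplication by a central element `a` of `A` is a bimodule endomorphism of `M`, so it
induces an endomorphism of `M ⊗[A] N ≅ B` commuting with right multiplication by `B`, i.e. left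
multiplication by some `b`. Since `m ↦ (x ↦ m ⊗ x)` is injective for an invertible bimodule, this
gives `m a = b m`. As `B` acts faithfully on `M`, `b` is unique and central, so `a ↦ b` is an
algebra map `Z(A) → Z(B)`; the same construction for `N` is its inverse, and `f` is this map
transported along the identifications of `R` with the two centers. -/

namespace tensorOver

variable (M : CBimod R B A) (N : CBimod R A C)

lemma mk_op_smul_tmul (m : M.carrier) (a : A) (x : N.carrier) :
    (Submodule.Quotient.mk ((op a • m) ⊗ₜ[R] x) : tensorOver M N) =
      Submodule.Quotient.mk (m ⊗ₜ[R] (a • x)) :=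
  (Submodule.Quotient.eq _).2 (Submodule.subset_span ⟨m, a, x, rfl⟩)

def mk : M.carrier →ₗ[R] N.carrier →ₗ[R] tensorOver M N :=
  (TensorProduct.mk R M.carrier N.carrier).compr₂ (midRel M N).mkQ

@[simp]
lemma mk_apply (m : M.carrier) (x : N.carrier) :
    mk M N m x = Submodule.Quotient.mk (m ⊗ₜ[R] x) := rfl

variable {M N} {P : Type*} [AddCommGroup P] [Module R P]

def lift (f : M.carrier →ₗ[R] N.carrier →ₗ[R] P)
    (hf : ∀ m (a : A) x, f (op a • m) x = f m (a • x)) : tensorOver M N →ₗ[R] P :=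
  (midRel M N).liftQ (TensorProduct.lift f) <| Submodule.span_le.2 <| by
    rintro _ ⟨m, a, x, rfl⟩
    simp [hf]

@[simp]
lemma lift_mk (f : M.carrier →ₗ[R] N.carrier →ₗ[R] P)
    (hf : ∀ m (a : A) x, f (op a • m) x = f m (a • x)) (m : M.carrier) (x : N.carrier) :
    lift f hf (Submodule.Quotient.mk (m ⊗ₜ[R] x)) = f m x := rfl

end tensorOver

namespace CBimod

variable (M : CBimod R B A)

def centerActionRight : Subalgebra.center R A →ₐ[R] Module.End R M.carrier :=
  (Algebra.lsmul R R M.carrier).comp <|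
    (Subalgebra.center R A).val.toOpposite fun x y => congrArg Subtype.val (mul_comm x y)

variable {M}
  (hfaith : Function.Injective (Algebra.lsmul R R M.carrier : B →ₐ[R] Module.End R M.carrier))
  (hex : ∀ a ∈ Subalgebra.center R A, ∃ b : B, ∀ m : M.carrier, op a • m = b • m)

noncomputable def centerToLeft : Subalgebra.center R A →ₐ[R] B :=
  (AlgEquiv.ofInjective _ hfaith).symm.toAlgHom.comp <|
    M.centerActionRight.codRestrict _ fun z =>
      (hex z z.2).imp fun _ hb => LinearMap.ext fun m => (hb m).symm

lemma lsmul_centerToLeft (z : Subalgebra.center R A) :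
    Algebra.lsmul R R M.carrier (centerToLeft hfaith hex z) = M.centerActionRight z :=
  congrArg Subtype.val ((AlgEquiv.ofInjective _ hfaith).apply_symm_apply _)

lemma centerToLeft_smul (z : Subalgebra.center R A) (m : M.carrier) :
    centerToLeft hfaith hex z • m = op (z : A) • m :=
  LinearMap.congr_fun (lsmul_centerToLeft hfaith hex z) m

lemma centerToLeft_mem_center (z : Subalgebra.center R A) :
    centerToLeft hfaith hex z ∈ Subalgebra.center R B := by
  refine Subalgebra.mem_center_iff.2 fun b => hfaith ?_
  ext m
  simp only [map_mul, Module.End.mul_apply, Algebra.lsmul_apply, centerToLeft_smul]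
  exact smul_comm _ _ _

noncomputable def centerHom : Subalgebra.center R A →ₐ[R] Subalgebra.center R B :=
  (centerToLeft hfaith hex).codRestrict _ (centerToLeft_mem_center hfaith hex)

lemma centerHom_smul (z : Subalgebra.center R A) (m : M.carrier) :
    (centerHom hfaith hex z : B) • m = op (z : A) • m :=
  centerToLeft_smul hfaith hex z m

end CBimod

namespace TensorIsoAlgebra

variable {M : CBimod R B A} {N : CBimod R A B}

lemma lsmul_injective (hMN : TensorIsoAlgebra M N) :
    Function.Injective (Algebra.lsmul R R M.carrier : B →ₐ[R] Module.End R M.carrier) := by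
  refine (injective_iff_map_eq_zero _).2 fun b hb => ?_
  obtain ⟨g, hg, -⟩ := hMN
  have hbg : LinearMap.mulLeft R b ∘ₗ g.toLinearMap = 0 := by
    ext m x
    simp [← hg, show b • m = 0 from LinearMap.congr_fun hb m]
  simpa using LinearMap.congr_fun hbg (g.symm 1)

lemma eq_zero_of_forall_mk_tmul_eq_zero (hMN : TensorIsoAlgebra M N)
    (hNM : TensorIsoAlgebra N M) {m₀ : M.carrier}
    (h₀ : ∀ x : N.carrier, (Submodule.Quotient.mk (m₀ ⊗ₜ[R] x) : tensorOver M N) = 0) :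
    m₀ = 0 := by
  obtain ⟨g, -, hg⟩ := hMN
  obtain ⟨h, hh, -⟩ := hNM
  let act : A →ₗ[R] Module.End R M.carrier :=
    (Algebra.lsmul R R M.carrier).toLinearMap ∘ₗ (opLinearEquiv R).toLinearMap
  -- `W (m ⊗ x) m' = m · h (x ⊗ m')`. No associativity relating `g` and `h` is assumed; instead
  -- `W` turns the left `B`-action on `M` into right multiplication on `M ⊗[A] N ≅ B`, whence
  -- `m₀ · h (y ⊗ m') = W (g⁻¹ 1) (g (m₀ ⊗ y) • m') = 0`, and `h` is onto.
  let W : tensorOver M N →ₗ[R] Module.End R M.carrier :=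
    tensorOver.lift ((LinearMap.llcomp R M.carrier A M.carrier).compl₁₂ act.flip
      ((tensorOver.mk N M).compr₂ h.toLinearMap)) fun m a x => by
        ext m'
        simp [act, hh]
  have hW : ∀ (b : B) (m' : M.carrier) z, W z (b • m') = W (g.symm (g z * b)) m' := by
    intro b m'
    have : W.flip (b • m') =
        W.flip m' ∘ₗ g.symm.toLinearMap ∘ₗ LinearMap.mulRight R b ∘ₗ g.toLinearMap := by
      ext m x
      simp [W, act, ← hg, ← tensorOver.mk_op_smul_tmul]
    exact LinearMap.congr_fun this
  have hm₀ : (act.flip m₀) ∘ₗ h.toLinearMap = 0 := by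
    ext y m'
    calc op (h (Submodule.Quotient.mk (y ⊗ₜ[R] m'))) • m₀
        = W (g.symm (g (g.symm 1) * g (Submodule.Quotient.mk (m₀ ⊗ₜ[R] y)))) m' := by
          simp [W, act]
      _ = 0 := by rw [← hW, h₀]; simp
  simpa [act] using LinearMap.congr_fun hm₀ (h.symm 1)

lemma exists_op_smul_eq_smul (hMN : TensorIsoAlgebra M N) (hNM : TensorIsoAlgebra N M)
    {a : A} (ha : a ∈ Subalgebra.center R A) :
    ∃ b : B, ∀ m : M.carrier, op a • m = b • m := by
  have hfaith := fun m₀ : M.carrier => eq_zero_of_forall_mk_tmul_eq_zero (m₀ := m₀) hMN hNM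
  obtain ⟨g, hg₁, hg₂⟩ := hMN
  have hcomm : ∀ (a' : A) (m : M.carrier), op a • op a' • m = op a' • op a • m := by
    intro a' m
    rw [← mul_smul, ← mul_smul, ← op_mul, ← op_mul, Subalgebra.mem_center_iff.1 ha]
  -- `Θ (m ⊗ x) = m a ⊗ x`; it commutes with right multiplication by `B`, so under `g` it is left
  -- multiplication by `g (Θ (g⁻¹ 1))`.
  let Θ : tensorOver M N →ₗ[R] tensorOver M N :=
    tensorOver.lift ((tensorOver.mk M N).comp (Algebra.lsmul R R M.carrier (op a))) fun m a' x => by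
      change Submodule.Quotient.mk ((op a • op a' • m) ⊗ₜ[R] x) =
        Submodule.Quotient.mk ((op a • m) ⊗ₜ[R] (a' • x))
      rw [hcomm, tensorOver.mk_op_smul_tmul]
  have hΘ : ∀ (b : B) z, g (Θ (g.symm (g z * b))) = g (Θ z) * b := by
    intro b
    have : Θ ∘ₗ g.symm.toLinearMap ∘ₗ LinearMap.mulRight R b ∘ₗ g.toLinearMap =
        g.symm.toLinearMap ∘ₗ LinearMap.mulRight R b ∘ₗ g.toLinearMap ∘ₗ Θ := by
      ext m x
      simp [Θ, ← hg₂]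
    intro z
    simpa using congr(g ($this z))
  have hΘ₁ : ∀ z, g (Θ z) = g (Θ (g.symm 1)) * g z := fun z => by
    simpa using hΘ (g z) (g.symm 1)
  refine ⟨g (Θ (g.symm 1)), fun m => sub_eq_zero.1 <| hfaith _ fun x => g.injective ?_⟩
  rw [TensorProduct.sub_tmul, Submodule.Quotient.mk_sub, map_sub, hg₁, ← hΘ₁]
  simp [Θ]

lemma smul_eq_op_smul (hMN : TensorIsoAlgebra M N) (hNM : TensorIsoAlgebra N M)
    {a : A} (ha : a ∈ Subalgebra.center R A) {b : B}
    (hab : ∀ m : M.carrier, op a • m = b • m) (y : N.carrier) : a • y = op b • y := by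
  refine sub_eq_zero.1 <| eq_zero_of_forall_mk_tmul_eq_zero hNM hMN fun m => ?_
  obtain ⟨h, hh₁, hh₂⟩ := hNM
  apply h.injective
  rw [TensorProduct.sub_tmul, Submodule.Quotient.mk_sub, map_sub, hh₁,
    ← Subalgebra.mem_center_iff.1 ha, ← hh₂, hab, ← tensorOver.mk_op_smul_tmul, sub_self,
    map_zero]

noncomputable def centerHom (hMN : TensorIsoAlgebra M N) (hNM : TensorIsoAlgebra N M) :
    Subalgebra.center R A →ₐ[R] Subalgebra.center R B :=
  CBimod.centerHom hMN.lsmul_injective fun _ => exists_op_smul_eq_smul hMN hNM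

lemma centerHom_smul (hMN : TensorIsoAlgebra M N) (hNM : TensorIsoAlgebra N M)
    (z : Subalgebra.center R A) (m : M.carrier) :
    (centerHom hMN hNM z : B) • m = op (z : A) • m :=
  CBimod.centerHom_smul _ _ z m

lemma centerHom_comp_centerHom (hMN : TensorIsoAlgebra M N) (hNM : TensorIsoAlgebra N M) :
    (centerHom hNM hMN).comp (centerHom hMN hNM) = AlgHom.id R _ :=
  AlgHom.ext fun z => Subtype.ext <| hNM.lsmul_injective <| LinearMap.ext fun y => by
    rw [AlgHom.comp_apply, Algebra.lsmul_apply, centerHom_smul]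
    exact (smul_eq_op_smul hMN hNM z.2 (fun m => (centerHom_smul hMN hNM z m).symm) y).symm

noncomputable def centerEquiv (hMN : TensorIsoAlgebra M N) (hNM : TensorIsoAlgebra N M) :
    Subalgebra.center R A ≃ₐ[R] Subalgebra.center R B :=
  AlgEquiv.ofAlgHom (centerHom hMN hNM) (centerHom hNM hMN)
    (centerHom_comp_centerHom hNM hMN) (centerHom_comp_centerHom hMN hNM)

end TensorIsoAlgebra

/-- Let `k` be a commutative ring, `R` a commutative `k`-algebra, and `A`,
`B` `k`-algebras equipped with `k`-algebra isomorphisms `ζA : R ≅ Z(A)`, `ζB : R ≅ Z(B)`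
onto their centers.  Let `M` be an invertible `k`-symmetric `(B,A)`-bimodule, i.e. there is
a `(A,B)`-bimodule `N` with `M ⊗[A] N ≅ B` as `B`-bimodules and `N ⊗[B] M ≅ A` as
`A`-bimodules.  Then there is a unique `k`-algebra automorphism `f` of `R` such that
`m · r = f(r) · m` for all `m ∈ M`, `r ∈ R`, where `r` acts on the right through `ζA` and
`f(r)` acts on the left through `ζB`. -/
theorem stmt_5 {k R A B : Type u} [CommRing k] [CommRing R] [Algebra k R]
    [Ring A] [Algebra k A] [Ring B] [Algebra k B]
    (ζA : R ≃ₐ[k] Subalgebra.center k A) (ζB : R ≃ₐ[k] Subalgebra.center k B)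
    (M : CBimod k B A)
    (hM : ∃ N : CBimod k A B, TensorIsoAlgebra M N ∧ TensorIsoAlgebra N M) :
    ∃! f : R ≃ₐ[k] R, ∀ (m : M.carrier) (r : R),
      MulOpposite.op ((ζA r : A)) • m = ((ζB (f r) : B)) • m := by
  obtain ⟨N, hMN, hNM⟩ := hM
  refine ⟨ζA.trans ((hMN.centerEquiv hNM).trans ζB.symm), fun m r => ?_, fun f hf => ?_⟩
  · simp [TensorIsoAlgebra.centerEquiv, TensorIsoAlgebra.centerHom_smul]
  · ext r
    refine ζB.injective <| Subtype.ext <| hMN.lsmul_injective <| LinearMap.ext fun m => ?_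
    simp [← hf, TensorIsoAlgebra.centerEquiv, TensorIsoAlgebra.centerHom_smul]
end

section
/- Let K = ℚ(√2) be the field obtained from ℚ by adjoining √2. Then the quaternion algebra A = (−1, −√2) over K, i.e., the K-algebra with generators i, j and relations i² = −1, j² = −√2, ij = −ji, is a division ring (and a central simple K-algebra). -/
/-!
Over an ordered field with `a, b < 0` the reduced norm `N(x) = x * star x` of `(a, b)` is a
positive definite quadratic form, so every `x ≠ 0` has inverse `N(x)⁻¹ • star x`; taking
`a = -1`, `b = -√2` gives a division ring, hence a simple ring. Commuting with `i` and `j`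
kills the imaginary parts of a central element once `2` and `a` are invertible.
-/

open scoped Quaternion
open IntermediateField

noncomputable section

/-- `K = ℚ(√2)`, the subfield of `ℝ` generated over `ℚ` by `√2`. -/
abbrev Ksqrt2 : IntermediateField ℚ ℝ := ℚ⟮Real.sqrt 2⟯

/-- `√2` as an element of `K = ℚ(√2)`. -/
def sqrt2 : Ksqrt2 := ⟨Real.sqrt 2, IntermediateField.mem_adjoin_simple_self ℚ (Real.sqrt 2)⟩

theorem isSimpleRing_of_forall_isUnit {R : Type*} [Ring R] [Nontrivial R]
    (h : ∀ x : R, x ≠ 0 → IsUnit x) : IsSimpleRing R :=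
  letI := DivisionRing.ofIsUnitOrEqZero fun x => (em (x = 0)).symm.imp_left (h x)
  inferInstance

namespace QuaternionAlgebra

variable {K : Type*} [Field K]

theorem isUnit_of_re_mul_star_ne_zero {c₁ c₂ c₃ : K} {x : ℍ[K, c₁, c₂, c₃]}
    (hx : (x * star x).re ≠ 0) : IsUnit x := by
  set r := (x * star x).re
  have inv_mul_r : ((r⁻¹ * r : K) : ℍ[K, c₁, c₂, c₃]) = 1 := by
    rw [inv_mul_cancel₀ hx, coe_one]
  refine ⟨⟨x, r⁻¹ • star x, ?_, ?_⟩, rfl⟩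
  · rw [mul_smul_comm, mul_star_eq_coe, smul_coe, inv_mul_r]
  · rw [smul_mul_assoc, star_comm_self', mul_star_eq_coe, smul_coe, inv_mul_r]

theorem isCentral {a b : K} [NeZero (2 : K)] (ha : a ≠ 0) : Algebra.IsCentral K ℍ[K, a, b] := by
  refine ⟨fun x hx => ?_⟩
  rw [Subalgebra.mem_center_iff] at hx
  have hi := hx ⟨0, 1, 0, 0⟩
  have hj := hx ⟨0, 0, 1, 0⟩
  simp only [QuaternionAlgebra.ext_iff, re_mul, imI_mul, imJ_mul, imK_mul] at hi hj
  obtain ⟨-, -, hiK, hiJ⟩ := hi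
  obtain ⟨-, -, -, hjI⟩ := hj
  have hI : x.imI = 0 :=
    (mul_eq_zero.mp (by linear_combination -hjI : 2 * x.imI = 0)).resolve_left two_ne_zero
  have hJ : x.imJ = 0 :=
    (mul_eq_zero.mp (by linear_combination hiJ : 2 * x.imJ = 0)).resolve_left two_ne_zero
  have hK : x.imK = 0 :=
    (mul_eq_zero.mp (by linear_combination hiK : 2 * a * x.imK = 0)).resolve_left
      (mul_ne_zero two_ne_zero ha)
  exact Algebra.mem_bot.mpr
    ⟨x.re, QuaternionAlgebra.ext rfl (by simp [hI]) (by simp [hJ]) (by simp [hK])⟩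

variable [LinearOrder K] [IsStrictOrderedRing K]

theorem re_mul_star_ne_zero_of_neg {a b : K} (ha : a < 0) (hb : b < 0) {x : ℍ[K, a, b]}
    (hx : x ≠ 0) : (x * star x).re ≠ 0 := by
  have hre : (x * star x).re =
      x.re ^ 2 + -a * x.imI ^ 2 + -b * x.imJ ^ 2 + a * b * x.imK ^ 2 := by
    simp only [re_mul, re_star, imI_star, imJ_star, imK_star]; ring
  have hI : 0 ≤ -a * x.imI ^ 2 := mul_nonneg (neg_nonneg.2 ha.le) (sq_nonneg _)
  have hJ : 0 ≤ -b * x.imJ ^ 2 := mul_nonneg (neg_nonneg.2 hb.le) (sq_nonneg _)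
  have hK : 0 ≤ a * b * x.imK ^ 2 :=
    mul_nonneg (mul_nonneg_of_nonpos_of_nonpos ha.le hb.le) (sq_nonneg _)
  contrapose! hx
  rw [hre, add_eq_zero_iff_of_nonneg (by positivity) hK,
    add_eq_zero_iff_of_nonneg (by positivity) hJ, add_eq_zero_iff_of_nonneg (sq_nonneg _) hI] at hx
  obtain ⟨⟨⟨h_re, h_I⟩, h_J⟩, h_K⟩ := hx
  ext <;> simp_all [ha.ne, hb.ne]

end QuaternionAlgebra

theorem sqrt2_pos : 0 < sqrt2 := show (0 : ℝ) < Real.sqrt 2 by positivity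

/-- The quaternion algebra `(−1, −√2)` over `K = ℚ(√2)`, i.e. the `K`-algebra
with generators `i`, `j` and relations `i² = −1`, `j² = −√2`, `ij = −ji`, is a division ring
(every nonzero element is a unit) and a central simple `K`-algebra. -/
theorem stmt_6 :
    (∀ x : ℍ[Ksqrt2, -1, -sqrt2], x ≠ 0 → IsUnit x) ∧
    Algebra.IsCentral Ksqrt2 ℍ[Ksqrt2, -1, -sqrt2] ∧
    IsSimpleRing ℍ[Ksqrt2, -1, -sqrt2] := by
  have hunit : ∀ x : ℍ[Ksqrt2, -1, -sqrt2], x ≠ 0 → IsUnit x := fun _ hx =>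
    QuaternionAlgebra.isUnit_of_re_mul_star_ne_zero <|
      QuaternionAlgebra.re_mul_star_ne_zero_of_neg (by norm_num) (neg_lt_zero.mpr sqrt2_pos) hx
  exact ⟨hunit, QuaternionAlgebra.isCentral (by norm_num), isSimpleRing_of_forall_isUnit hunit⟩
end
end

section
/- Let k be a field of characteristic p > 0 and n ≥ 1, with A = A_n(k) the Weyl algebra and P = k[z_1,…,z_{2n}] acting via z_i ↦ x_i^p. Then the map sending x_i to (−1)^{ω_i} x_i (ω_i = 0 for i ≤ n, ω_i = 1 for i > n) induces a P-algebra isomorphism from the opposite algebra A^op onto ω(−1)_* A, i.e., onto A with the twisted P-algebra structure z_i ↦ (−1)^{-ω_i} x_i^p. -/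
/-!
Read in `A^op`, the assignment `x_i ↦ (-1)^{ω_i} x_i` respects the Weyl relations: the bracket
`[x_i, x_j]` is nonzero only for generators from different halves, whose signs differ, and
reversing the order of multiplication flips the sign of the bracket. Applied twice it is the
identity, so it is an isomorphism `A ≃ A^op`. Its inverse sends the central element `x_i^p` to
`(-1)^{ω_i p} x_i^p = (-1)^{-ω_i} x_i^p`, because `(-1)^p = -1` in characteristic `p`; hence it
carries the `P`-structure of `A^op` to the twisted one of `ω(-1)_* A`.
-/

open scoped TensorProduct

noncomputable section

/-- The defining relations of the Weyl algebra `A_n(k)`: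
`x_i x_j − x_j x_i = δ_{i,j+n} − δ_{i+n,j}` for `1 ≤ i, j ≤ 2n` (here indexed by `Fin (2*n)`). -/
inductive WeylRel (k : Type) [Field k] (n : ℕ) :
    FreeAlgebra k (Fin (2 * n)) → FreeAlgebra k (Fin (2 * n)) → Prop
  | rel (i j : Fin (2 * n)) : WeylRel k n
      (FreeAlgebra.ι k i * FreeAlgebra.ι k j)
      (FreeAlgebra.ι k j * FreeAlgebra.ι k i +
        algebraMap k (FreeAlgebra k (Fin (2 * n)))
          ((if (i : ℕ) = (j : ℕ) + n then 1 else 0) -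
           (if (j : ℕ) = (i : ℕ) + n then 1 else 0)))

/-- The Weyl algebra `A_n(k)`, the quotient of the free `k`-algebra on `2n` generators by the
relations `x_i x_j − x_j x_i = δ_{i,j+n} − δ_{i+n,j}`. -/
abbrev WeylAlgebra (k : Type) [Field k] (n : ℕ) : Type := RingQuot (WeylRel k n)

variable (k : Type) [Field k] (n : ℕ)

/-- The generators `x_i` of the Weyl algebra. -/
def wx (i : Fin (2 * n)) : WeylAlgebra k n :=
  RingQuot.mkAlgHom k (WeylRel k n) (FreeAlgebra.ι k i)

lemma wx_rel (i j : Fin (2 * n)) :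
    wx k n i * wx k n j = wx k n j * wx k n i +
      algebraMap k (WeylAlgebra k n)
        ((if (i : ℕ) = (j : ℕ) + n then 1 else 0) -
         (if (j : ℕ) = (i : ℕ) + n then 1 else 0)) := by
  have h := RingQuot.mkAlgHom_rel k (WeylRel.rel (k := k) (n := n) i j)
  simpa [wx, map_mul, map_add, AlgHom.commutes] using h

lemma wx_pow_comm (i j : Fin (2 * n)) (m : ℕ) :
    wx k n j * wx k n i ^ (m + 1) = wx k n i ^ (m + 1) * wx k n j +
      algebraMap k (WeylAlgebra k n)
        (((m : k) + 1) * ((if (j : ℕ) = (i : ℕ) + n then 1 else 0) -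
          (if (i : ℕ) = (j : ℕ) + n then 1 else 0))) * wx k n i ^ m := by
  set c : k := (if (j : ℕ) = (i : ℕ) + n then 1 else 0) -
      (if (i : ℕ) = (j : ℕ) + n then 1 else 0) with hc
  have base : wx k n j * wx k n i = wx k n i * wx k n j + algebraMap k (WeylAlgebra k n) c :=
    wx_rel k n j i
  induction m with
  | zero => simpa using base
  | succ m ih =>
    have h1 : wx k n j * wx k n i ^ (m + 2) = (wx k n j * wx k n i ^ (m + 1)) * wx k n i := by
      rw [pow_succ, ← mul_assoc]
    rw [h1, ih, add_mul, mul_assoc, mul_assoc, ← pow_succ, base, mul_add, ← mul_assoc,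
      ← pow_succ]
    have h2 : wx k n i ^ (m + 1) * algebraMap k (WeylAlgebra k n) c =
        algebraMap k (WeylAlgebra k n) c * wx k n i ^ (m + 1) :=
      (Algebra.commutes c _).symm
    rw [h2]
    have h3 : ((m : k) + 1 + 1) * c = c + ((m : k) + 1) * c := by ring
    rw [Nat.cast_add, Nat.cast_one, h3, map_add, add_mul]
    noncomm_ring

/-- In characteristic `p`, the `p`-th powers of the generators are central: `x_j` commutes
with `x_i ^ p` (here `p = ringChar k`). -/
lemma wx_pow_char_comm (i j : Fin (2 * n)) :
    wx k n j * wx k n i ^ ringChar k = wx k n i ^ ringChar k * wx k n j := by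
  rcases Nat.eq_zero_or_pos (ringChar k) with h | h
  · rw [h, pow_zero, mul_one, one_mul]
  · obtain ⟨m, hm⟩ : ∃ m, ringChar k = m + 1 := ⟨ringChar k - 1, by omega⟩
    have hcast : (m : k) + 1 = 0 := by
      have h0 : ((ringChar k : ℕ) : k) = 0 := ringChar.Nat.cast_ringChar
      rw [hm] at h0
      push_cast at h0
      exact h0
    conv_lhs => rw [hm, wx_pow_comm, hcast, zero_mul, map_zero, zero_mul, add_zero, ← hm]

lemma wx_pow_mem_center (i : Fin (2 * n)) :
    wx k n i ^ ringChar k ∈ Subalgebra.center k (WeylAlgebra k n) := by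
  rw [Subalgebra.mem_center_iff]
  intro b
  obtain ⟨y, rfl⟩ := RingQuot.mkAlgHom_surjective k (WeylRel k n) b
  induction y using FreeAlgebra.induction with
  | grade0 r => rw [AlgHom.commutes]; exact Algebra.commutes r _
  | grade1 j => exact wx_pow_char_comm k n i j
  | mul y z hy hz => rw [map_mul, mul_assoc, hz, ← mul_assoc, hy, mul_assoc]
  | add y z hy hz => rw [map_add, add_mul, mul_add, hy, hz]

/-- The polynomial ring `P = k[z_1, …, z_{2n}]`. -/
abbrev WeylCenter (k : Type) [Field k] (n : ℕ) : Type := MvPolynomial (Fin (2 * n)) k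

/-- In characteristic `p`, the element `x_i^p` is central in `A_n(k)` (here `p = ringChar k`). -/
def weylCenterGen (i : Fin (2 * n)) : Subalgebra.center k (WeylAlgebra k n) :=
  ⟨wx k n i ^ ringChar k, wx_pow_mem_center k n i⟩

/-- The `k`-algebra map `P → A_n(k)`, `z_i ↦ x_i^p`, where `p` is the characteristic of `k`. -/
def weylCentralMap : WeylCenter k n →ₐ[k] WeylAlgebra k n :=
  (Subalgebra.center k (WeylAlgebra k n)).val.comp (MvPolynomial.aeval (weylCenterGen k n))

/-- `A_n(k)` as a `P`-algebra via `z_i ↦ x_i^p` (the image of `P` being central). -/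
instance : Algebra (WeylCenter k n) (WeylAlgebra k n) :=
  RingHom.toAlgebra' (weylCentralMap k n).toRingHom fun q x =>
    (Subalgebra.mem_center_iff.mp (MvPolynomial.aeval (weylCenterGen k n) q).2 x).symm

/-- `ω_i`: `0` for `i ≤ n` and `1` for `i > n` (with the 0-based indexing of `Fin (2*n)`:
`0` for `i.val < n`, `1` otherwise). -/
def weylOmega (i : Fin (2 * n)) : ℕ := if (i : ℕ) < n then 0 else 1

/-- The central element `c^{−ω_i} · x_i^p` of `A_n(k)`. -/
def weylTwistGen (c : k) (i : Fin (2 * n)) : Subalgebra.center k (WeylAlgebra k n) :=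
  ⟨(c ^ weylOmega n i)⁻¹ • wx k n i ^ ringChar k,
    Subalgebra.smul_mem _ (wx_pow_mem_center k n i) _⟩

/-- The twisted `k`-algebra map `P → A_n(k)`, `z_i ↦ c^{−ω_i} · x_i^p`. -/
def weylTwistMap (c : k) : WeylCenter k n →ₐ[k] WeylAlgebra k n :=
  (Subalgebra.center k (WeylAlgebra k n)).val.comp (MvPolynomial.aeval (weylTwistGen k n c))

/-- `ω(c)_* A_n(k)` : the Weyl algebra with the twisted `P`-algebra structure
`z_i ↦ c^{−ω_i} · x_i^p`. -/
def TwistedWeyl (c : k) : Type := WeylAlgebra k n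

instance (c : k) : Ring (TwistedWeyl k n c) := inferInstanceAs (Ring (WeylAlgebra k n))

instance (c : k) : Algebra k (TwistedWeyl k n c) :=
  inferInstanceAs (Algebra k (WeylAlgebra k n))

/-- The twisted `P`-algebra structure on `ω(c)_* A_n(k)`. -/
instance (c : k) : Algebra (WeylCenter k n) (TwistedWeyl k n c) :=
  RingHom.toAlgebra' (weylTwistMap k n c).toRingHom fun q x =>
    (Subalgebra.mem_center_iff.mp (MvPolynomial.aeval (weylTwistGen k n c) q).2 x).symm

/-- The generators `x_i`, viewed in the twisted Weyl algebra `ω(c)_* A_n(k)`. -/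
def twx (c : k) (i : Fin (2 * n)) : TwistedWeyl k n c := wx k n i

end

open MulOpposite

noncomputable section

variable (k : Type) [Field k] (n : ℕ)

lemma neg_one_pow_weylOmega_mul_bracket (i j : Fin (2 * n)) :
    (-1 : k) ^ weylOmega n i * (-1 : k) ^ weylOmega n j *
      ((if (i : ℕ) = (j : ℕ) + n then 1 else 0) - (if (j : ℕ) = (i : ℕ) + n then 1 else 0)) =
    -((if (i : ℕ) = (j : ℕ) + n then 1 else 0) - (if (j : ℕ) = (i : ℕ) + n then 1 else 0)) := by
  have := i.isLt; have := j.isLt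
  simp only [weylOmega]
  split_ifs <;> first | omega | norm_num

def weylAntiHom : WeylAlgebra k n →ₐ[k] (WeylAlgebra k n)ᵐᵒᵖ :=
  RingQuot.liftAlgHom k ⟨FreeAlgebra.lift k fun i => ((-1 : k) ^ weylOmega n i) • op (wx k n i),
    by
      rintro _ _ ⟨i, j⟩
      simp only [map_mul, map_add, FreeAlgebra.lift_ι_apply, AlgHom.commutes]
      rw [smul_mul_smul_comm, smul_mul_smul_comm, ← op_mul, ← op_mul, wx_rel k n j i, op_add,
        smul_add, mul_comm ((-1 : k) ^ weylOmega n j)]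
      congr 1
      rw [← MulOpposite.algebraMap_apply, Algebra.smul_def, ← map_mul]
      congr 1
      linear_combination -neg_one_pow_weylOmega_mul_bracket k n i j⟩

lemma weylAntiHom_wx (i : Fin (2 * n)) :
    weylAntiHom k n (wx k n i) = ((-1 : k) ^ weylOmega n i) • op (wx k n i) := by
  rw [wx, weylAntiHom, RingQuot.liftAlgHom_mkAlgHom_apply, FreeAlgebra.lift_ι_apply, wx]

lemma weylAntiHom_unop_involutive : Function.Involutive fun a => unop (weylAntiHom k n a) := by
  intro a
  obtain ⟨y, rfl⟩ := RingQuot.mkAlgHom_surjective k (WeylRel k n) a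
  induction y using FreeAlgebra.induction with
  | grade0 r => simp only [AlgHom.commutes, MulOpposite.algebraMap_apply, unop_op]
  | grade1 i =>
    change unop (weylAntiHom k n (unop (weylAntiHom k n (wx k n i)))) = wx k n i
    rw [weylAntiHom_wx, unop_smul, unop_op, map_smul, weylAntiHom_wx, smul_smul, ← pow_add,
      Even.neg_one_pow ⟨_, rfl⟩, one_smul, unop_op]
  | mul y z hy hz => simp only [map_mul, unop_mul, hy, hz]
  | add y z hy hz => simp only [map_add, unop_add, hy, hz]

def weylAntiEquiv : WeylAlgebra k n ≃ₐ[k] (WeylAlgebra k n)ᵐᵒᵖ :=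
  AlgEquiv.ofBijective (weylAntiHom k n)
    (opEquiv.bijective.comp (weylAntiHom_unop_involutive k n).bijective)

lemma weylAntiEquiv_symm_op_wx (i : Fin (2 * n)) :
    (weylAntiEquiv k n).symm (op (wx k n i)) = ((-1 : k) ^ weylOmega n i) • wx k n i := by
  rw [AlgEquiv.symm_apply_eq, map_smul]
  change _ = _ • weylAntiHom k n (wx k n i)
  rw [weylAntiHom_wx, smul_smul, ← pow_add, Even.neg_one_pow ⟨_, rfl⟩, one_smul]

lemma weylAntiEquiv_symm_algebraMap (p : ℕ) [CharP k p] [Fact p.Prime] (q : WeylCenter k n) :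
    ((weylAntiEquiv k n).symm (algebraMap (WeylCenter k n) (WeylAlgebra k n)ᵐᵒᵖ q) :
      TwistedWeyl k n (-1)) = algebraMap (WeylCenter k n) (TwistedWeyl k n (-1)) q := by
  refine RingHom.congr_fun (MvPolynomial.ringHom_ext
    (f := ((weylAntiEquiv k n).symm.toRingHom : (WeylAlgebra k n)ᵐᵒᵖ →+* TwistedWeyl k n (-1)).comp
      (algebraMap (WeylCenter k n) (WeylAlgebra k n)ᵐᵒᵖ)) (fun r => ?_) (fun i => ?_)) q
  · change (weylAntiEquiv k n).symm (op (weylCentralMap k n (MvPolynomial.C r))) =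
      weylTwistMap k n (-1) (MvPolynomial.C r)
    rw [← MvPolynomial.algebraMap_eq, AlgHom.commutes, AlgHom.commutes,
      ← MulOpposite.algebraMap_apply, AlgEquiv.commutes]
  · change (weylAntiEquiv k n).symm (op (weylCentralMap k n (MvPolynomial.X i))) =
      weylTwistMap k n (-1) (MvPolynomial.X i)
    simp only [weylCentralMap, weylTwistMap, AlgHom.comp_apply, MvPolynomial.aeval_X]
    change (weylAntiEquiv k n).symm (op (wx k n i ^ ringChar k)) =
      ((-1 : k) ^ weylOmega n i)⁻¹ • wx k n i ^ ringChar k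
    rw [op_pow, map_pow, weylAntiEquiv_symm_op_wx, smul_pow]
    congr 1
    rw [ringChar.eq k p, ← pow_mul, mul_comm, pow_mul, neg_one_pow_char, ← inv_pow, inv_neg_one]

def weylOpEquivTwisted (p : ℕ) [CharP k p] [Fact p.Prime] :
    (WeylAlgebra k n)ᵐᵒᵖ ≃ₐ[WeylCenter k n] TwistedWeyl k n (-1) :=
  AlgEquiv.ofRingEquiv
    (f := ((weylAntiEquiv k n).symm.toRingEquiv : (WeylAlgebra k n)ᵐᵒᵖ ≃+* TwistedWeyl k n (-1)))
    (weylAntiEquiv_symm_algebraMap k n p)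

end

theorem stmt_11_general (k : Type) [Field k] (n p : ℕ) [CharP k p] (hp : 0 < p) :
    ∃ g : (WeylAlgebra k n)ᵐᵒᵖ ≃ₐ[WeylCenter k n] TwistedWeyl k n (-1),
      ∀ i : Fin (2 * n),
        g (MulOpposite.op (wx k n i)) = ((-1 : k) ^ weylOmega n i) • twx k n (-1) i := by
  have : NeZero p := ⟨hp.ne'⟩
  have := CharP.char_is_prime_of_pos k p
  exact ⟨weylOpEquivTwisted k n p, weylAntiEquiv_symm_op_wx k n⟩

/-- Let `k` be a field of characteristic `p > 0` and `n ≥ 1`, with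
`A = A_n(k)` and `P = k[z_1,…,z_{2n}]` acting via `z_i ↦ x_i^p`.  The map `x_i ↦ (−1)^{ω_i} x_i`
induces a `P`-algebra isomorphism from the opposite algebra `A^op` onto `ω(−1)_* A`. -/
theorem stmt_11 (k : Type) [Field k] (n p : ℕ) [CharP k p] (hp : 0 < p) (hn : 1 ≤ n) :
    ∃ g : (WeylAlgebra k n)ᵐᵒᵖ ≃ₐ[WeylCenter k n] TwistedWeyl k n (-1),
      ∀ i : Fin (2 * n),
        g (MulOpposite.op (wx k n i)) = ((-1 : k) ^ weylOmega n i) • twx k n (-1) i :=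
  stmt_11_general k n p hp
end
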